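/- Suppose f : ℝ^n × ℝ → ℝ is continuously differentiable near (a,b), f(a,b) = 0, ∂_y f(a,b) ≠ 0, and the implicit function y = g(x) with g(a) = b and f(x, g(x)) = 0 near a is a multivariate polynomial. Then there is a compact rectangle R × I containing (a,b), with R = ∏_{k=1}^n [ξ_k, η_k] and I = [m₀, M₀], such that (f, R, I) satisfies Assumption 1 with constant sign ε = n_y(f), and for every grid partition of R with N_k greater than the degree of g in x_k for each k, the coefficients (c_β)_{0≤β<N} of g(x) = Σ_{0≤β<N} c_β (x−a)^β are the unique solution of the linear system Σ_{0≤β<N} c_β ∏_{k=1}^n [ ((ξ_k + α_kΔ_k − a_k)^{β_k+1} − (ξ_k + (α_k−1)Δ_k − a_k)^{β_k+1}) / (β_k+1) ] = d_α, where d_α = ((1+ε)/2)·|R_α|·M₀ + ((1−ε)/2)·|R_α|·m₀ − ε·∬_{R_α×I} Θ_y f(x,y) dx dy. -/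

import Mathlib

/-!
Let `ε` be the sign of `∂_y f(a,b)`. On a small box `R × I` around `(a,b)` the function
`y ↦ ε f(x,y)` is strictly increasing and vanishes at `y = g(x)`, so `Θ(f(x,y)) = Θ(ε (y - g(x)))`
there and `g(x) = (1+ε)/2 M₀ + (1-ε)/2 m₀ - ε ∫_I Θ(f(x,y)) dy`; integrating over `R_α` gives
`d_α = ∫_{R_α} g`. Expanding `g` in the monomials `(x - a)^β`, the system matrix becomes the
Kronecker product over `k` of the one-dimensional moment matrices
`(∫_{t_i}^{t_{i+1}} (t - a_k)^j dt)` of the grid nodes `t_i` in direction `k`. Each of them is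
nonsingular: a polynomial of degree `< N` with vanishing integral over `N` disjoint intervals has a
root in each of them, so it is zero.
-/

open Set MeasureTheory Matrix Filter Topology

theorem exists_mem_Ioo_eq_zero_of_intervalIntegral_eq_zero {p : ℝ → ℝ} (hp : Continuous p)
    {u v : ℝ} (huv : u < v) (h : ∫ x in u..v, p x = 0) : ∃ r ∈ Ioo u v, p r = 0 :=
  exists_hasDerivAt_eq_zero huv (by fun_prop) (by simp [h])
    fun x _ => (hp.integral_hasStrictDerivAt u x).hasDerivAt

noncomputable def intervalMomentMatrix (t : ℕ → ℝ) (c : ℝ) (N : ℕ) :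
    Matrix (Fin N) (Fin N) ℝ :=
  of fun i j => ∫ x in t i..t (i + 1), (x - c) ^ (j : ℕ)

theorem intervalMomentMatrix_apply (t : ℕ → ℝ) (c : ℝ) {N : ℕ} (i j : Fin N) :
    intervalMomentMatrix t c N i j =
      ((t (i + 1) - c) ^ ((j : ℕ) + 1) - (t i - c) ^ ((j : ℕ) + 1)) / ((j : ℕ) + 1) := by
  rw [intervalMomentMatrix, of_apply, intervalIntegral.integral_comp_sub_right
    (fun x => x ^ (j : ℕ)), integral_pow]

theorem intervalMomentMatrix_mulVec (t : ℕ → ℝ) (c : ℝ) {N : ℕ} (v : Fin N → ℝ) (i : Fin N) :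
    (intervalMomentMatrix t c N *ᵥ v) i =
      ∫ x in t i..t (i + 1), ∑ j : Fin N, (x - c) ^ (j : ℕ) * v j := by
  rw [intervalIntegral.integral_finsetSum fun j _ =>
    (by fun_prop : Continuous _).intervalIntegrable _ _]
  simp only [mulVec, dotProduct, intervalMomentMatrix, of_apply,
    intervalIntegral.integral_mul_const]

theorem det_intervalMomentMatrix_ne_zero {t : ℕ → ℝ} (ht : StrictMono t) (c : ℝ) (N : ℕ) :
    (intervalMomentMatrix t c N).det ≠ 0 := by
  intro hdet
  obtain ⟨v, hv, hMv⟩ := exists_mulVec_eq_zero_iff.mpr hdet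
  have hroot : ∀ i : Fin N,
      ∃ r ∈ Ioo (t i) (t (i + 1)), ∑ j : Fin N, (r - c) ^ (j : ℕ) * v j = 0 :=
    fun i => exists_mem_Ioo_eq_zero_of_intervalIntegral_eq_zero
      (continuous_finsetSum _ fun j _ => by fun_prop)
      (ht (Nat.lt_succ_self i)) (by rw [← intervalMomentMatrix_mulVec, hMv, Pi.zero_apply])
  choose r hr hr0 using hroot
  have hr_mono : StrictMono fun i => r i - c := fun i i' hii' => by
    have : t (i + 1) ≤ t i' := ht.monotone (Nat.succ_le_of_lt hii')
    linarith [(hr i).2, (hr i').1]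
  exact hv (eq_zero_of_mulVec_eq_zero
    (det_vandermonde_ne_zero_iff.mpr hr_mono.injective) (funext hr0))

def piKronecker {R : Type*} [CommMonoid R] {n : ℕ} {ι κ : Fin n → Type*}
    (m : ∀ k, Matrix (ι k) (κ k) R) : Matrix (∀ k, ι k) (∀ k, κ k) R :=
  of fun α β => ∏ k, m k (α k) (β k)

theorem isUnit_det_piKronecker {R : Type*} [CommRing R] :
    ∀ {n : ℕ} {ι : Fin n → Type*} [∀ k, Fintype (ι k)] [∀ k, DecidableEq (ι k)]
      (m : ∀ k, Matrix (ι k) (ι k) R), (∀ k, IsUnit (m k).det) → IsUnit (piKronecker m).det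
  | 0, _, _, _, _, _ => by simp [det_unique, piKronecker]
  | n + 1, ι, _, _, m, hm => by
    have htail := isUnit_det_piKronecker (fun k => m k.succ) fun k => hm k.succ
    have hsplit : (piKronecker m).submatrix (Fin.consEquiv ι) (Fin.consEquiv ι) =
        kroneckerMap (· * ·) (m 0) (piKronecker fun k => m k.succ) := by
      ext ⟨i, α⟩ ⟨j, β⟩
      simp [piKronecker, Fin.prod_univ_succ, Fin.consEquiv]
    rw [← det_submatrix_equiv_self (Fin.consEquiv ι), hsplit, det_kronecker]
    exact ((hm 0).pow _).mul (htail.pow _)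

theorem setIntegral_Icc_pi_prod {ι : Type*} [Fintype ι] (φ : ι → ℝ → ℝ) (l u : ι → ℝ) :
    ∫ x in Icc l u, ∏ k, φ k (x k) = ∏ k, ∫ t in Icc (l k) (u k), φ k t := by
  rw [← pi_univ_Icc, volume_pi, Measure.restrict_pi_pi, integral_fintype_prod_eq_prod]

noncomputable def gridNode (ξ η : ℝ) (N i : ℕ) : ℝ := ξ + i * ((η - ξ) / N)

theorem gridNode_strictMono {ξ η : ℝ} (h : ξ < η) {N : ℕ} (hN : 0 < N) :
    StrictMono (gridNode ξ η N) := fun i j hij => by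
  have : 0 < (η - ξ) / N := div_pos (sub_pos.mpr h) (by exact_mod_cast hN)
  unfold gridNode
  gcongr

theorem gridNode_monotone {ξ η : ℝ} (h : ξ ≤ η) (N : ℕ) : Monotone (gridNode ξ η N) :=
  fun i j hij => by
    unfold gridNode
    gcongr

theorem gridNode_mem_Icc {ξ η : ℝ} (h : ξ ≤ η) {N i : ℕ} (hi : i ≤ N) :
    gridNode ξ η N i ∈ Icc ξ η := by
  rcases Nat.eq_zero_or_pos N with rfl | hN
  · simp [gridNode, h]
  have hΔ : 0 ≤ (η - ξ) / N := div_nonneg (sub_nonneg.mpr h) (Nat.cast_nonneg N)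
  have hiN : (i : ℝ) * ((η - ξ) / N) ≤ η - ξ := by
    rw [mul_div_assoc', div_le_iff₀ (by exact_mod_cast hN), mul_comm]
    gcongr
  exact ⟨le_add_of_nonneg_right (mul_nonneg (Nat.cast_nonneg i) hΔ),
    by unfold gridNode; linarith⟩

section Grid

variable {n : ℕ}

noncomputable def gridCell (ξ η : Fin n → ℝ) (N : Fin n → ℕ) (α : ∀ k, Fin (N k)) :
    Set (Fin n → ℝ) :=
  Icc (fun k => gridNode (ξ k) (η k) (N k) (α k)) (fun k => gridNode (ξ k) (η k) (N k) (α k + 1))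

theorem gridCell_eq_Icc (ξ η : Fin n → ℝ) (N : Fin n → ℕ) (α : ∀ k, Fin (N k)) :
    gridCell ξ η N α = Icc (fun k => ξ k + ((α k : ℕ) : ℝ) * ((η k - ξ k) / (N k : ℝ)))
      (fun k => ξ k + (((α k : ℕ) : ℝ) + 1) * ((η k - ξ k) / (N k : ℝ))) := by
  simp [gridCell, gridNode]

theorem gridCell_subset_Icc {ξ η : Fin n → ℝ} (h : ξ ≤ η) {N : Fin n → ℕ}
    (α : ∀ k, Fin (N k)) : gridCell ξ η N α ⊆ Icc ξ η := fun _ hx =>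
  ⟨fun k => (gridNode_mem_Icc (h k) (α k).isLt.le).1.trans (hx.1 k),
    fun k => (hx.2 k).trans (gridNode_mem_Icc (h k) (α k).isLt).2⟩

noncomputable def gridMomentMatrix (ξ η a : Fin n → ℝ) (N : Fin n → ℕ) :
    Matrix (∀ k, Fin (N k)) (∀ k, Fin (N k)) ℝ :=
  piKronecker fun k => intervalMomentMatrix (gridNode (ξ k) (η k) (N k)) (a k) (N k)

theorem gridMomentMatrix_mulVec_eq_sum (ξ η a : Fin n → ℝ) {N : Fin n → ℕ}
    (w : (∀ k, Fin (N k)) → ℝ) (α : ∀ k, Fin (N k)) :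
    (gridMomentMatrix ξ η a N *ᵥ w) α = ∑ β, w β *
      ∏ k, (((ξ k + (((α k : ℕ) : ℝ) + 1) * ((η k - ξ k) / (N k : ℝ)) - a k) ^ ((β k : ℕ) + 1) -
          (ξ k + ((α k : ℕ) : ℝ) * ((η k - ξ k) / (N k : ℝ)) - a k) ^ ((β k : ℕ) + 1)) /
        (((β k : ℕ) : ℝ) + 1)) := by
  simp [mulVec, dotProduct, gridMomentMatrix, piKronecker, intervalMomentMatrix_apply, gridNode,
    mul_comm]

theorem gridMomentMatrix_mulVec_eq_integral {ξ η : Fin n → ℝ} (h : ξ ≤ η) (a : Fin n → ℝ)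
    {N : Fin n → ℕ} (w : (∀ k, Fin (N k)) → ℝ) (α : ∀ k, Fin (N k)) :
    (gridMomentMatrix ξ η a N *ᵥ w) α =
      ∫ x in gridCell ξ η N α, ∑ β, w β * ∏ k, (x k - a k) ^ (β k : ℕ) := by
  have hentry : ∀ β, gridMomentMatrix ξ η a N α β =
      ∫ x in gridCell ξ η N α, ∏ k, (x k - a k) ^ (β k : ℕ) := fun β => by
    rw [gridCell, setIntegral_Icc_pi_prod (fun k t => (t - a k) ^ (β k : ℕ))]
    simp only [gridMomentMatrix, piKronecker, of_apply]
    refine Finset.prod_congr rfl fun k _ => ?_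
    rw [integral_Icc_eq_integral_Ioc, ← intervalIntegral.integral_of_le
      (gridNode_monotone (h k) _ (Nat.le_succ _))]
    rfl
  have hint : ∀ β : ∀ k, Fin (N k), IntegrableOn
      (fun x : Fin n → ℝ => ∏ k, (x k - a k) ^ (β k : ℕ)) (gridCell ξ η N α) := fun β =>
    (continuous_finsetProd _ fun k _ => by fun_prop).continuousOn.integrableOn_compact
      isCompact_Icc
  simp only [mulVec, dotProduct, hentry, ← integral_mul_const]
  rw [← integral_finsetSum _ fun β _ => (hint β).mul_const _]
  simp only [mul_comm]

theorem isUnit_gridMomentMatrix {ξ η : Fin n → ℝ} (h : ∀ k, ξ k < η k) (a : Fin n → ℝ)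
    {N : Fin n → ℕ} (hN : ∀ k, 0 < N k) : IsUnit (gridMomentMatrix ξ η a N) :=
  (isUnit_iff_isUnit_det _).mpr <| isUnit_det_piKronecker _ fun k =>
    (det_intervalMomentMatrix_ne_zero (gridNode_strictMono (h k) (hN k)) _ _).isUnit

theorem sum_mul_eq_of_zero_padding {R : Type*} [NonUnitalNonAssocSemiring R]
    {D N : Fin n → ℕ} (hD : ∀ k, D k ≤ N k) {c₀ : (∀ k, Fin (D k)) → R}
    {c : (∀ k, Fin (N k)) → R}
    (hc : ∀ β, c β = if h : ∀ k, (β k : ℕ) < D k then c₀ (fun k => ⟨β k, h k⟩) else 0)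
    (G : (Fin n → ℕ) → R) :
    ∑ β, c β * G (fun k => β k) = ∑ β, c₀ β * G (fun k => β k) := by
  refine (Fintype.sum_of_injective (fun β k => Fin.castLE (hD k) (β k))
    (fun β γ h => funext fun k => Fin.castLE_injective _ (congrFun h k)) _ _ ?_ ?_).symm
  · intro β hβ
    rw [hc, dif_neg, zero_mul]
    exact fun hlt => hβ ⟨fun k => ⟨β k, hlt k⟩, rfl⟩
  · intro β
    rw [hc, dif_pos fun k => by simp]
    rfl

end Grid

theorem eq_sub_mul_setIntegral_heaviside {ε m₀ M₀ y₀ : ℝ} (hε : ε = 1 ∨ ε = -1)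
    (hy₀ : y₀ ∈ Icc m₀ M₀) :
    y₀ = (1 + ε) / 2 * M₀ + (1 - ε) / 2 * m₀ -
      ε * ∫ y in Icc m₀ M₀, (if 0 ≤ ε * (y - y₀) then (1 : ℝ) else 0) := by
  rcases hε with rfl | rfl
  · have hset : Ici y₀ ∩ Icc m₀ M₀ = Icc y₀ M₀ := by
      ext y; simp only [mem_inter_iff, mem_Ici, mem_Icc]
      exact ⟨fun h => ⟨h.1, h.2.2⟩, fun h => ⟨h.1, hy₀.1.trans h.1, h.2⟩⟩
    have hind : (fun y => if 0 ≤ 1 * (y - y₀) then (1 : ℝ) else 0) = (Ici y₀).indicator 1 := by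
      ext y; simp [indicator_apply]
    rw [hind, integral_indicator_one measurableSet_Ici,
      measureReal_restrict_apply measurableSet_Ici, hset, Real.volume_real_Icc_of_le hy₀.2]
    ring
  · have hset : Iic y₀ ∩ Icc m₀ M₀ = Icc m₀ y₀ := by
      ext y; simp only [mem_inter_iff, mem_Iic, mem_Icc]
      exact ⟨fun h => ⟨h.2.1, h.1⟩, fun h => ⟨h.2, h.1, h.2.trans hy₀.2⟩⟩
    have hind : (fun y => if 0 ≤ -1 * (y - y₀) then (1 : ℝ) else 0) = (Iic y₀).indicator 1 := by
      ext y; simp [indicator_apply]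
    rw [hind, integral_indicator_one measurableSet_Iic,
      measureReal_restrict_apply measurableSet_Iic, hset, Real.volume_real_Icc_of_le hy₀.1]
    ring

theorem setIntegral_eq_sub_mul_setIntegral_prod_heaviside {X : Type*} [MeasurableSpace X]
    {μ : Measure X} [SFinite μ] {B : Set X} (hB : MeasurableSet B) (hμB : μ B ≠ ⊤)
    {ε m₀ M₀ : ℝ} (hε : ε = 1 ∨ ε = -1) {g : X → ℝ} (hg : Measurable g)
    (hgI : ∀ x ∈ B, g x ∈ Icc m₀ M₀) {f : X → ℝ → ℝ}
    (hf : ∀ x ∈ B, ∀ y ∈ Icc m₀ M₀, (0 ≤ f x y ↔ 0 ≤ ε * (y - g x))) :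
    ∫ x in B, g x ∂μ = (1 + ε) / 2 * μ.real B * M₀ + (1 - ε) / 2 * μ.real B * m₀ -
      ε * ∫ p in B ×ˢ Icc m₀ M₀, (if 0 ≤ f p.1 p.2 then (1 : ℝ) else 0) ∂μ.prod volume := by
  set S := {p : X × ℝ | 0 ≤ ε * (p.2 - g p.1)}
  have hS : MeasurableSet S := measurableSet_le measurable_const (by fun_prop)
  have hSint : IntegrableOn (S.indicator 1) (B ×ˢ Icc m₀ M₀) (μ.prod volume) :=
    (integrableOn_const (C := (1 : ℝ))
      (by simp [Measure.prod_prod, hμB, ENNReal.mul_eq_top])).indicator hS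
  have : IsFiniteMeasure (μ.restrict B) := isFiniteMeasure_restrict.mpr hμB
  have hgint : IntegrableOn g B μ :=
    Measure.integrableOn_of_bounded hμB hg.aestronglyMeasurable (ae_restrict_of_forall_mem hB
      fun x hx => (Real.norm_eq_abs _).trans_le (abs_le_max_abs_abs (hgI x hx).1 (hgI x hx).2))
  have hfS : ∀ p ∈ B ×ˢ Icc m₀ M₀,
      (if 0 ≤ f p.1 p.2 then (1 : ℝ) else 0) = S.indicator 1 p := fun p hp => by
    simp only [indicator_apply, S, mem_ofPred_eq, hf p.1 hp.1 p.2 hp.2, Pi.one_apply]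
  have hinner : ∀ x ∈ B, ε * ∫ y in Icc m₀ M₀, S.indicator 1 (x, y) =
      (1 + ε) / 2 * M₀ + (1 - ε) / 2 * m₀ - g x := fun x hx => by
    have := eq_sub_mul_setIntegral_heaviside hε (hgI x hx)
    simp only [indicator_apply, S, mem_ofPred_eq, Pi.one_apply]
    linarith
  rw [setIntegral_congr_fun (hB.prod measurableSet_Icc) hfS, setIntegral_prod _ hSint,
    ← integral_const_mul, setIntegral_congr_fun hB hinner,
    integral_sub (integrable_const _) hgint, setIntegral_const, smul_eq_mul]
  ring

theorem StrictMonoOn.nonneg_mul_iff {φ : ℝ → ℝ} {I : Set ℝ} (hφ : StrictMonoOn φ I)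
    {y₀ y : ℝ} (hy₀ : y₀ ∈ I) (hy : y ∈ I) (h0 : φ y₀ = 0) (ε : ℝ) :
    0 ≤ ε * φ y ↔ 0 ≤ ε * (y - y₀) := by
  rcases lt_trichotomy ε 0 with hε | rfl | hε
  · rw [← neg_mul_neg, ← neg_mul_neg ε, mul_nonneg_iff_of_pos_left (neg_pos.mpr hε),
      mul_nonneg_iff_of_pos_left (neg_pos.mpr hε), neg_nonneg, neg_nonneg, sub_nonpos,
      ← hφ.le_iff_le hy hy₀, h0]
  · simp
  · rw [mul_nonneg_iff_of_pos_left hε, mul_nonneg_iff_of_pos_left hε, sub_nonneg,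
      ← hφ.le_iff_le hy₀ hy, h0]

theorem eventually_deriv_slice_pos {E : Type*} [NormedAddCommGroup E] [NormedSpace ℝ E]
    {F : E × ℝ → ℝ} {p₀ : E × ℝ} (hF : ContDiffAt ℝ 1 F p₀)
    (hpos : 0 < deriv (fun y => F (p₀.1, y)) p₀.2) :
    ∀ᶠ p in 𝓝 p₀, 0 < deriv (fun y => F (p.1, y)) p.2 := by
  have hslice : ∀ p, DifferentiableAt ℝ F p →
      deriv (fun y => F (p.1, y)) p.2 = fderiv ℝ F p (0, 1) := fun p hp =>
    (hp.hasFDerivAt.comp_hasDerivAt p.2 ((hasDerivAt_const _ _).prodMk (hasDerivAt_id _))).deriv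
  have hcont : ContinuousAt (fun p => fderiv ℝ F p (0, 1)) p₀ :=
    (hF.continuousAt_fderiv one_ne_zero).clm_apply continuousAt_const
  rw [hslice p₀ (hF.differentiableAt one_ne_zero)] at hpos
  filter_upwards [hF.eventually (by simp), hcont.eventually (lt_mem_nhds hpos)] with p hp hp'
  rwa [hslice p (hp.differentiableAt one_ne_zero)]

section ImplicitBox

variable {ι : Type*} [Fintype ι] {f : (ι → ℝ) → ℝ → ℝ} {a : ι → ℝ} {b : ℝ} {g : (ι → ℝ) → ℝ}

theorem exists_box_strictMonoOn_of_eventually_eq_zero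
    (hf : ContDiffAt ℝ 1 (fun p : (ι → ℝ) × ℝ => f p.1 p.2) (a, b))
    (hpos : 0 < deriv (fun y => f a y) b) (hg : ContinuousAt g a) (hgb : g a = b)
    (hgf : ∀ᶠ x in 𝓝 a, f x (g x) = 0) :
    ∃ (ξ η : ι → ℝ) (m₀ M₀ : ℝ), (∀ k, ξ k < η k) ∧ a ∈ Icc ξ η ∧ b ∈ Icc m₀ M₀ ∧
      ∀ x ∈ Icc ξ η, g x ∈ Icc m₀ M₀ ∧ f x (g x) = 0 ∧ StrictMonoOn (f x) (Icc m₀ M₀) := by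
  obtain ⟨u, hu, v, hv, huv⟩ := mem_nhds_prod_iff.mp (eventually_deriv_slice_pos hf hpos)
  obtain ⟨δ, hδ, hδv⟩ := Metric.nhds_basis_closedBall.mem_iff.mp hv
  have hW : u ∩ {x | f x (g x) = 0} ∩ g ⁻¹' Metric.closedBall b δ ∈ 𝓝 a :=
    inter_mem (inter_mem hu hgf) (hg.preimage_mem_nhds (hgb ▸ Metric.closedBall_mem_nhds b hδ))
  obtain ⟨r, hr, hrW⟩ := Metric.nhds_basis_closedBall.mem_iff.mp hW
  have hbox : Icc (fun k => a k - r) (fun k => a k + r) = Metric.closedBall a r := by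
    simp only [closedBall_pi a hr.le, Real.closedBall_eq_Icc, pi_univ_Icc]
  rw [Real.closedBall_eq_Icc] at hδv hrW
  refine ⟨fun k => a k - r, fun k => a k + r, b - δ, b + δ, fun k => by linarith,
    hbox ▸ Metric.mem_closedBall_self hr.le, ⟨by linarith, by linarith⟩, fun x hx => ?_⟩
  obtain ⟨⟨hxu, hx0⟩, hxg⟩ := hrW (hbox ▸ hx)
  have hderiv : ∀ y ∈ Icc (b - δ) (b + δ), 0 < deriv (f x) y :=
    fun y hy => huv (mk_mem_prod hxu (hδv hy))
  refine ⟨hxg, hx0, strictMonoOn_of_deriv_pos (convex_Icc _ _) (fun y hy => ?_)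
    fun y hy => hderiv y (interior_subset hy)⟩
  exact (differentiableAt_of_deriv_ne_zero (hderiv y hy).ne').continuousAt.continuousWithinAt

theorem exists_box_sign_change_across_graph
    (hf : ContDiffAt ℝ 1 (fun p : (ι → ℝ) × ℝ => f p.1 p.2) (a, b))
    (hdy : deriv (fun y => f a y) b ≠ 0) (hg : ContinuousAt g a) (hgb : g a = b)
    (hgf : ∀ᶠ x in 𝓝 a, f x (g x) = 0) :
    ∃ (ε : ℝ) (ξ η : ι → ℝ) (m₀ M₀ : ℝ), (ε = 1 ∨ ε = -1) ∧ (∀ k, ξ k < η k) ∧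
      a ∈ Icc ξ η ∧ b ∈ Icc m₀ M₀ ∧ ∀ x ∈ Icc ξ η,
        (g x ∈ Icc m₀ M₀ ∧ (∀ y ∈ Icc m₀ M₀, y < g x → ε * f x y < 0) ∧
          (∀ y ∈ Icc m₀ M₀, g x < y → 0 < ε * f x y)) ∧
        ∀ y ∈ Icc m₀ M₀, (0 ≤ f x y ↔ 0 ≤ ε * (y - g x)) := by
  obtain ⟨ε, hε, hεpos⟩ : ∃ ε : ℝ, (ε = 1 ∨ ε = -1) ∧ 0 < deriv (fun y => ε * f a y) b := by
    simp only [deriv_const_mul_field]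
    rcases hdy.lt_or_gt with h | h
    exacts [⟨-1, Or.inr rfl, by linarith⟩, ⟨1, Or.inl rfl, by linarith⟩]
  obtain ⟨ξ, η, m₀, M₀, hξη, haR, hbI, hbox⟩ :=
    exists_box_strictMonoOn_of_eventually_eq_zero (f := fun x y => ε * f x y)
      (contDiffAt_const.mul hf) hεpos hg hgb (hgf.mono fun x hx => by simp [hx])
  refine ⟨ε, ξ, η, m₀, M₀, hε, hξη, haR, hbI, fun x hx => ?_⟩
  obtain ⟨hgI, hzero, hmono⟩ := hbox x hx
  have hεε : ε * ε = 1 := by rcases hε with rfl | rfl <;> norm_num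
  refine ⟨⟨hgI, fun y hy h => hzero ▸ hmono hy hgI h, fun y hy h => hzero ▸ hmono hgI hy h⟩,
    fun y hy => ?_⟩
  rw [← hmono.nonneg_mul_iff hgI hy hzero, ← mul_assoc, hεε, one_mul]

end ImplicitBox

theorem statement6_general (n : ℕ) (f : (Fin n → ℝ) → ℝ → ℝ)
    (a : Fin n → ℝ) (b : ℝ)
    (hf : ContDiffAt ℝ 1 (fun p : (Fin n → ℝ) × ℝ => f p.1 p.2) (a, b))
    (hdy : deriv (fun y => f a y) b ≠ 0)
    (D : Fin n → ℕ) (c₀ : ((k : Fin n) → Fin (D k)) → ℝ)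
    (g : (Fin n → ℝ) → ℝ)
    (hg : ∀ x, g x = ∑ β : (k : Fin n) → Fin (D k), c₀ β * ∏ k, (x k - a k) ^ ((β k : ℕ)))
    (hgb : g a = b)
    (hgf : ∀ᶠ x in nhds a, f x (g x) = 0) :
    ∃ (ξ η : Fin n → ℝ) (m₀ M₀ : ℝ) (ε : ℝ) (y₀ : (Fin n → ℝ) → ℝ),
      a ∈ Icc ξ η ∧ b ∈ Icc m₀ M₀ ∧
      ((ε = 1 ∧ ∀ x ∈ Icc ξ η, y₀ x ∈ Icc m₀ M₀ ∧
          (∀ y ∈ Icc m₀ M₀, y < y₀ x → f x y < 0) ∧ (∀ y ∈ Icc m₀ M₀, y₀ x < y → 0 < f x y)) ∨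
       (ε = -1 ∧ ∀ x ∈ Icc ξ η, y₀ x ∈ Icc m₀ M₀ ∧
          (∀ y ∈ Icc m₀ M₀, y < y₀ x → 0 < f x y) ∧ (∀ y ∈ Icc m₀ M₀, y₀ x < y → f x y < 0))) ∧
      ∀ Nn : Fin n → ℕ, (∀ k, 0 < Nn k) → (∀ k, D k ≤ Nn k) →
        ∀ c : ((k : Fin n) → Fin (Nn k)) → ℝ,
          (∀ β : (k : Fin n) → Fin (Nn k),
            c β = if h : ∀ k, (β k : ℕ) < D k then c₀ (fun k => ⟨(β k : ℕ), h k⟩) else 0) →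
          ∀ d : ((k : Fin n) → Fin (Nn k)) → ℝ,
            (∀ α : (k : Fin n) → Fin (Nn k),
              d α = (1 + ε) / 2 *
                  (volume (Icc (fun k => ξ k + ((α k : ℕ) : ℝ) * ((η k - ξ k) / (Nn k : ℝ)))
                    (fun k => ξ k + (((α k : ℕ) : ℝ) + 1) * ((η k - ξ k) / (Nn k : ℝ))))).toReal * M₀ +
                (1 - ε) / 2 *
                  (volume (Icc (fun k => ξ k + ((α k : ℕ) : ℝ) * ((η k - ξ k) / (Nn k : ℝ)))
                    (fun k => ξ k + (((α k : ℕ) : ℝ) + 1) * ((η k - ξ k) / (Nn k : ℝ))))).toReal * m₀ -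
                ε * ∫ p in (Icc (fun k => ξ k + ((α k : ℕ) : ℝ) * ((η k - ξ k) / (Nn k : ℝ)))
                    (fun k => ξ k + (((α k : ℕ) : ℝ) + 1) * ((η k - ξ k) / (Nn k : ℝ)))) ×ˢ Icc m₀ M₀,
                  (if 0 ≤ f p.1 p.2 then (1 : ℝ) else 0)) →
            (∀ α : (k : Fin n) → Fin (Nn k),
              ∑ β : (k : Fin n) → Fin (Nn k), c β *
                ∏ k, (((ξ k + (((α k : ℕ) : ℝ) + 1) * ((η k - ξ k) / (Nn k : ℝ)) - a k) ^ ((β k : ℕ) + 1) -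
                    (ξ k + ((α k : ℕ) : ℝ) * ((η k - ξ k) / (Nn k : ℝ)) - a k) ^ ((β k : ℕ) + 1)) /
                  (((β k : ℕ) : ℝ) + 1)) = d α) ∧
            ∀ c' : ((k : Fin n) → Fin (Nn k)) → ℝ,
              (∀ α : (k : Fin n) → Fin (Nn k),
                ∑ β : (k : Fin n) → Fin (Nn k), c' β *
                  ∏ k, (((ξ k + (((α k : ℕ) : ℝ) + 1) * ((η k - ξ k) / (Nn k : ℝ)) - a k) ^ ((β k : ℕ) + 1) -
                      (ξ k + ((α k : ℕ) : ℝ) * ((η k - ξ k) / (Nn k : ℝ)) - a k) ^ ((β k : ℕ) + 1)) /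
                    (((β k : ℕ) : ℝ) + 1)) = d α) → c' = c := by
  have hgc : Continuous g := by
    rw [funext hg]
    exact continuous_finsetSum _ fun β _ => continuous_const.mul
      (continuous_finsetProd _ fun k _ => by fun_prop)
  obtain ⟨ε, ξ, η, m₀, M₀, hε, hξη, haR, hbI, hsign⟩ :=
    exists_box_sign_change_across_graph hf hdy hgc.continuousAt hgb hgf
  refine ⟨ξ, η, m₀, M₀, ε, g, haR, hbI, ?_, fun N hN hD c hc d hd => ?_⟩
  · rcases hε with rfl | rfl
    · exact Or.inl ⟨rfl, fun x hx => by simpa using (hsign x hx).1⟩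
    · exact Or.inr ⟨rfl, fun x hx => by simpa using (hsign x hx).1⟩
  have hcell : ∀ α, d α = ∫ x in gridCell ξ η N α, g x := fun α => by
    have hsub := gridCell_subset_Icc (fun k => (hξη k).le) α
    rw [gridCell_eq_Icc] at hsub ⊢
    rw [setIntegral_eq_sub_mul_setIntegral_prod_heaviside measurableSet_Icc
      isCompact_Icc.measure_lt_top.ne hε hgc.measurable (fun x hx => (hsign x (hsub hx)).1.1)
      (fun x hx => (hsign x (hsub hx)).2), hd α, measureReal_def, Measure.volume_eq_prod]
  have hMc : ∀ α, (gridMomentMatrix ξ η a N *ᵥ c) α = ∫ x in gridCell ξ η N α, g x := fun α => by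
    rw [gridMomentMatrix_mulVec_eq_integral (fun k => (hξη k).le)]
    congr with x
    rw [hg, sum_mul_eq_of_zero_padding hD hc fun e => ∏ k, (x k - a k) ^ e k]
  simp only [← gridMomentMatrix_mulVec_eq_sum]
  exact ⟨fun α => (hMc α).trans (hcell α).symm, fun c' hc' =>
    (mulVec_injective_iff_isUnit.mpr (isUnit_gridMomentMatrix hξη a hN))
      (funext fun α => (hc' α).trans ((hcell α).trans (hMc α).symm))⟩

/-- If `f` is C¹ near `(a,b)`, `f(a,b) = 0`, `∂_y f(a,b) ≠ 0`, and the
implicit function `g` (with `g a = b`, `f(x, g x) = 0` near `a`) is a multivariate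
polynomial `g x = Σ_{0 ≤ β < D} c₀ β (x−a)^β`, then there is a compact rectangle
`R × I ∋ (a,b)` satisfying Assumption 1 with constant sign `ε`, and, for every grid
partition with `N_k` exceeding the degree of `g` in `x_k`, the (zero-extended)
coefficients are the unique solution of the linear system with data `d α` computed
from `f` via the Heaviside integrals. -/
theorem statement6 (n : ℕ) (f : (Fin n → ℝ) → ℝ → ℝ)
    (a : Fin n → ℝ) (b : ℝ)
    (hf : ContDiffAt ℝ 1 (fun p : (Fin n → ℝ) × ℝ => f p.1 p.2) (a, b))
    (hfab : f a b = 0)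
    (hdy : deriv (fun y => f a y) b ≠ 0)
    (D : Fin n → ℕ) (c₀ : ((k : Fin n) → Fin (D k)) → ℝ)
    (g : (Fin n → ℝ) → ℝ)
    (hg : ∀ x, g x = ∑ β : (k : Fin n) → Fin (D k), c₀ β * ∏ k, (x k - a k) ^ ((β k : ℕ)))
    (hgb : g a = b)
    (hgf : ∀ᶠ x in nhds a, f x (g x) = 0) :
    ∃ (ξ η : Fin n → ℝ) (m₀ M₀ : ℝ) (ε : ℝ) (y₀ : (Fin n → ℝ) → ℝ),
      a ∈ Icc ξ η ∧ b ∈ Icc m₀ M₀ ∧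
      ((ε = 1 ∧ ∀ x ∈ Icc ξ η, y₀ x ∈ Icc m₀ M₀ ∧
          (∀ y ∈ Icc m₀ M₀, y < y₀ x → f x y < 0) ∧ (∀ y ∈ Icc m₀ M₀, y₀ x < y → 0 < f x y)) ∨
       (ε = -1 ∧ ∀ x ∈ Icc ξ η, y₀ x ∈ Icc m₀ M₀ ∧
          (∀ y ∈ Icc m₀ M₀, y < y₀ x → 0 < f x y) ∧ (∀ y ∈ Icc m₀ M₀, y₀ x < y → f x y < 0))) ∧
      ∀ Nn : Fin n → ℕ, (∀ k, 0 < Nn k) → (∀ k, D k ≤ Nn k) →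
        ∀ c : ((k : Fin n) → Fin (Nn k)) → ℝ,
          (∀ β : (k : Fin n) → Fin (Nn k),
            c β = if h : ∀ k, (β k : ℕ) < D k then c₀ (fun k => ⟨(β k : ℕ), h k⟩) else 0) →
          ∀ d : ((k : Fin n) → Fin (Nn k)) → ℝ,
            (∀ α : (k : Fin n) → Fin (Nn k),
              d α = (1 + ε) / 2 *
                  (volume (Icc (fun k => ξ k + ((α k : ℕ) : ℝ) * ((η k - ξ k) / (Nn k : ℝ)))
                    (fun k => ξ k + (((α k : ℕ) : ℝ) + 1) * ((η k - ξ k) / (Nn k : ℝ))))).toReal * M₀ +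
                (1 - ε) / 2 *
                  (volume (Icc (fun k => ξ k + ((α k : ℕ) : ℝ) * ((η k - ξ k) / (Nn k : ℝ)))
                    (fun k => ξ k + (((α k : ℕ) : ℝ) + 1) * ((η k - ξ k) / (Nn k : ℝ))))).toReal * m₀ -
                ε * ∫ p in (Icc (fun k => ξ k + ((α k : ℕ) : ℝ) * ((η k - ξ k) / (Nn k : ℝ)))
                    (fun k => ξ k + (((α k : ℕ) : ℝ) + 1) * ((η k - ξ k) / (Nn k : ℝ)))) ×ˢ Icc m₀ M₀,
                  (if 0 ≤ f p.1 p.2 then (1 : ℝ) else 0)) →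
            (∀ α : (k : Fin n) → Fin (Nn k),
              ∑ β : (k : Fin n) → Fin (Nn k), c β *
                ∏ k, (((ξ k + (((α k : ℕ) : ℝ) + 1) * ((η k - ξ k) / (Nn k : ℝ)) - a k) ^ ((β k : ℕ) + 1) -
                    (ξ k + ((α k : ℕ) : ℝ) * ((η k - ξ k) / (Nn k : ℝ)) - a k) ^ ((β k : ℕ) + 1)) /
                  (((β k : ℕ) : ℝ) + 1)) = d α) ∧
            ∀ c' : ((k : Fin n) → Fin (Nn k)) → ℝ,
              (∀ α : (k : Fin n) → Fin (Nn k),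
                ∑ β : (k : Fin n) → Fin (Nn k), c' β *
                  ∏ k, (((ξ k + (((α k : ℕ) : ℝ) + 1) * ((η k - ξ k) / (Nn k : ℝ)) - a k) ^ ((β k : ℕ) + 1) -
                      (ξ k + ((α k : ℕ) : ℝ) * ((η k - ξ k) / (Nn k : ℝ)) - a k) ^ ((β k : ℕ) + 1)) /
                    (((β k : ℕ) : ℝ) + 1)) = d α) → c' = c :=
  statement6_general n f a b hf hdy D c₀ g hg hgb hgf
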